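/- arXiv:2404.15722 — 2 statements merged into one kernel-verified Lean document; each statement's English description precedes it below -/
import Mathlib

section
/- Under the stated assumptions, the variance of Z, defined as Var(Z) = E[|Z|²] − |E[Z]|², equals (1 − |c_{ε_θ}(1)²·c_{ε_φ}(1)²|)·i₀² + σ_i². -/
/-!
`|Z|² = (i₀ + ε_i)²` because the phase factor has modulus one, so `E[|Z|²] = i₀² + σ_i²`.
The deterministic phase `e^{i(θ+φ)}` factors out of `E[Z]`, and independence splits the rest as
`E[i₀ + ε_i] · c_{ε_θ}(1) · c_{ε_φ}(1) = i₀ · c_{ε_θ}(1) · c_{ε_φ}(1)`, whence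
`|E[Z]|² = |c_{ε_θ}(1)² c_{ε_φ}(1)²| · i₀²`.
-/

open MeasureTheory ProbabilityTheory Complex

section

variable {Ω : Type*} [MeasurableSpace Ω] {μ : Measure Ω}

lemma norm_ofReal_mul_exp_I_mul_ofReal_sq (a t : ℝ) :
    ‖(a : ℂ) * exp (I * t)‖ ^ 2 = a ^ 2 := by
  rw [norm_mul, mul_comm I, norm_exp_ofReal_mul_I, mul_one, norm_real, Real.norm_eq_abs, sq_abs]

lemma integral_const_add_sq [IsProbabilityMeasure μ] (a : ℝ) {X : Ω → ℝ}
    (hX : Integrable X μ) (hX2 : Integrable (fun ω ↦ X ω ^ 2) μ) :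
    ∫ ω, (a + X ω) ^ 2 ∂μ = a ^ 2 + 2 * a * ∫ ω, X ω ∂μ + ∫ ω, X ω ^ 2 ∂μ := by
  have hlin : Integrable (fun ω ↦ a ^ 2 + 2 * a * X ω) μ :=
    (integrable_const _).add (hX.const_mul _)
  simp_rw [add_sq]
  rw [integral_add hlin hX2, integral_add (integrable_const _) (hX.const_mul _), integral_const,
    integral_const_mul, probReal_univ, one_smul]

lemma integral_ofReal_const_add [IsProbabilityMeasure μ] (a : ℝ) {X : Ω → ℝ}
    (hX : Integrable X μ) :
    ∫ ω, ((a + X ω : ℝ) : ℂ) ∂μ = a + ∫ ω, X ω ∂μ := by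
  rw [integral_complex_ofReal, integral_add (integrable_const _) hX, integral_const, probReal_univ,
    one_smul, ofReal_add]

lemma ProbabilityTheory.iIndepFun.integral_comp_mul_comp_mul_comp {X Y W : Ω → ℝ}
    (h : iIndepFun ![X, Y, W] μ) (hX : AEMeasurable X μ) (hY : AEMeasurable Y μ)
    (hW : AEMeasurable W μ) {f g k : ℝ → ℂ} (hf : Continuous f) (hg : Continuous g)
    (hk : Continuous k) :
    ∫ ω, f (X ω) * g (Y ω) * k (W ω) ∂μ =
      (∫ ω, f (X ω) ∂μ) * (∫ ω, g (Y ω) ∂μ) * ∫ ω, k (W ω) ∂μ := by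
  have hm : ∀ i, AEMeasurable (![X, Y, W] i) μ := by
    intro i; fin_cases i <;> assumption
  have hc : ∀ i, Continuous (![f, g, k] i) := by
    intro i; fin_cases i <;> assumption
  simpa [Fin.prod_univ_three] using
    h.integral_fun_prod_comp hm fun i ↦ (hc i).aestronglyMeasurable

end

theorem variance_of_noisy_current_phasor_general
    {Ω : Type*} [MeasurableSpace Ω] (μ : Measure Ω) [IsProbabilityMeasure μ]
    (i₀ θ φ σi : ℝ) (εi εθ εφ : Ω → ℝ)
    (hmi : Measurable εi) (hmθ : Measurable εθ) (hmφ : Measurable εφ)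
    (hindep : iIndepFun (m := fun _ : Fin 3 => (inferInstance : MeasurableSpace ℝ))
      ![εi, εθ, εφ] μ)
    (hii : Integrable εi μ)
    (hii2 : Integrable (fun ω => (εi ω) ^ 2) μ)
    (hEi : ∫ ω, εi ω ∂μ = 0)
    (hEi2 : ∫ ω, (εi ω) ^ 2 ∂μ = σi ^ 2) :
    (∫ ω, ‖(((i₀ + εi ω : ℝ) : ℂ)
          * Complex.exp (Complex.I * ((θ + φ + εθ ω + εφ ω : ℝ) : ℂ)))‖ ^ 2 ∂μ)
      - ‖(∫ ω, ((i₀ + εi ω : ℝ) : ℂ)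
          * Complex.exp (Complex.I * ((θ + φ + εθ ω + εφ ω : ℝ) : ℂ)) ∂μ)‖ ^ 2
      = (1 - ‖
            ((∫ ω, Complex.exp (Complex.I * ((1 : ℝ) : ℂ) * ((εθ ω : ℝ) : ℂ)) ∂μ) ^ 2
              * (∫ ω, Complex.exp (Complex.I * ((1 : ℝ) : ℂ) * ((εφ ω : ℝ) : ℂ)) ∂μ) ^ 2)‖)
          * i₀ ^ 2 + σi ^ 2 := by
  set cθ := ∫ ω, exp (I * ((1 : ℝ) : ℂ) * εθ ω) ∂μ
  set cφ := ∫ ω, exp (I * ((1 : ℝ) : ℂ) * εφ ω) ∂μ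
  have hphase : ∀ ω,
      ((i₀ + εi ω : ℝ) : ℂ) * exp (I * ((θ + φ + εθ ω + εφ ω : ℝ) : ℂ)) =
        exp (I * ((θ + φ : ℝ) : ℂ)) * (((i₀ + εi ω : ℝ) : ℂ) *
          exp (I * ((1 : ℝ) : ℂ) * εθ ω) * exp (I * ((1 : ℝ) : ℂ) * εφ ω)) := by
    intro ω
    simp only [ofReal_add, ofReal_one, mul_one, mul_add, exp_add]
    ring
  have hmean :
      ∫ ω, ((i₀ + εi ω : ℝ) : ℂ) * exp (I * ((θ + φ + εθ ω + εφ ω : ℝ) : ℂ)) ∂μ =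
        exp (I * ((θ + φ : ℝ) : ℂ)) * (i₀ * cθ * cφ) := by
    simp_rw [hphase, integral_const_mul]
    rw [hindep.integral_comp_mul_comp_mul_comp hmi.aemeasurable hmθ.aemeasurable
      hmφ.aemeasurable (f := fun x ↦ ((i₀ + x : ℝ) : ℂ))
      (g := fun x ↦ exp (I * ((1 : ℝ) : ℂ) * x))
      (k := fun x ↦ exp (I * ((1 : ℝ) : ℂ) * x))
      (by fun_prop) (by fun_prop) (by fun_prop),
      integral_ofReal_const_add i₀ hii, hEi, ofReal_zero, add_zero]
  simp_rw [norm_ofReal_mul_exp_I_mul_ofReal_sq]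
  rw [integral_const_add_sq i₀ hii hii2, hEi, hEi2, hmean, norm_mul, mul_comm I,
    norm_exp_ofReal_mul_I]
  simp only [norm_mul, norm_pow, norm_real, Real.norm_eq_abs, one_mul]
  rw [mul_pow, mul_pow, sq_abs]
  ring

/-- Variance of the EM current phasor:
`Var(Z) = E[|Z|²] − |E[Z]|² = (1 − |c_{ε_θ}(1)²·c_{ε_φ}(1)²|)·i₀² + σ_i²` for
`Z = (i₀ + ε_i)·exp(i(θ + φ + ε_θ + ε_φ))` with `ε_i, ε_θ, ε_φ` mutually independent,
`E[ε_i] = 0`, `E[ε_i²] = σ_i² < ∞`, `E[ε_θ] = 0`, `E[ε_φ] = 0`. -/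
theorem variance_of_noisy_current_phasor
    {Ω : Type*} [MeasurableSpace Ω] (μ : Measure Ω) [IsProbabilityMeasure μ]
    (i₀ θ φ σi : ℝ) (εi εθ εφ : Ω → ℝ)
    (hmi : Measurable εi) (hmθ : Measurable εθ) (hmφ : Measurable εφ)
    (hindep : iIndepFun (m := fun _ : Fin 3 => (inferInstance : MeasurableSpace ℝ))
      ![εi, εθ, εφ] μ)
    (hii : Integrable εi μ)
    (hii2 : Integrable (fun ω => (εi ω) ^ 2) μ)
    (hEi : ∫ ω, εi ω ∂μ = 0)
    (hEi2 : ∫ ω, (εi ω) ^ 2 ∂μ = σi ^ 2)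
    (hiθ : Integrable εθ μ) (hEθ : ∫ ω, εθ ω ∂μ = 0)
    (hiφ : Integrable εφ μ) (hEφ : ∫ ω, εφ ω ∂μ = 0) :
    (∫ ω, ‖(((i₀ + εi ω : ℝ) : ℂ)
          * Complex.exp (Complex.I * ((θ + φ + εθ ω + εφ ω : ℝ) : ℂ)))‖ ^ 2 ∂μ)
      - ‖(∫ ω, ((i₀ + εi ω : ℝ) : ℂ)
          * Complex.exp (Complex.I * ((θ + φ + εθ ω + εφ ω : ℝ) : ℂ)) ∂μ)‖ ^ 2
      = (1 - ‖
            ((∫ ω, Complex.exp (Complex.I * ((1 : ℝ) : ℂ) * ((εθ ω : ℝ) : ℂ)) ∂μ) ^ 2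
              * (∫ ω, Complex.exp (Complex.I * ((1 : ℝ) : ℂ) * ((εφ ω : ℝ) : ℂ)) ∂μ) ^ 2)‖)
          * i₀ ^ 2 + σi ^ 2 :=
  variance_of_noisy_current_phasor_general μ i₀ θ φ σi εi εθ εφ hmi hmθ hmφ hindep hii hii2 hEi hEi2
end

section
/- Assume in addition that Σ̄ is Hermitian positive definite. Let z ∈ ℂ^K, c ∈ ℂ^Q, and define g = 2Dᴴ(P*)⁻¹(z − W·z*). If x₀ ∈ ℂ^N satisfies C·x₀ = c and there exists λ ∈ ℂ^Q such that ḡ = Ḡ·x̄₀ + C̄ᴴ·λ̄, then x₀ minimizes the constrained weighted least-squares objective: for every x ∈ ℂ^N with C·x = c, the real number given by the 1×1 matrix (z̄ − D̄·x̄₀)ᴴ·Σ̄⁻¹·(z̄ − D̄·x̄₀) is less than or equal to that given by (z̄ − D̄·x̄)ᴴ·Σ̄⁻¹·(z̄ − D̄·x̄). -/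
open Matrix ComplexOrder

/-- Entrywise complex conjugation of a matrix. -/
noncomputable def cconj {m n : Type*} (B : Matrix m n ℂ) : Matrix m n ℂ :=
  B.map (starRingEnd ℂ)

/-- The augmented matrix `aug(B₁,B₂) = [[B₁, B₂],[B₂*, B₁*]]`. -/
noncomputable def aug {m n : Type*} (B₁ B₂ : Matrix m n ℂ) :
    Matrix (m ⊕ m) (n ⊕ n) ℂ :=
  Matrix.fromBlocks B₁ B₂ (cconj B₂) (cconj B₁)

/-- The augmented vector `v̄ = (v, v*)`. -/
noncomputable def augVec {n : Type*} (v : n → ℂ) : (n ⊕ n) → ℂ :=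
  Sum.elim v (fun i => starRingEnd ℂ (v i))

/-!
Write `M = Σ̄⁻¹` and `J̄ = aug(J₁, J₂)` with `J₁ = 2Dᴴ(P*)⁻¹`, `J₂ = −J₁W`. Since `P*` is the Schur
complement `Σ₁ − Σ₂(Σ₁*)⁻¹Σ₂*`, one has `J̄Σ̄ = 2D̄ᴴ`, i.e. `J̄ = 2D̄ᴴM`. As `ḡ = J̄z̄` and `Ḡ = J̄D̄`,
the stationarity equation says `2D̄ᴴM(z̄ − D̄x̄₀) = C̄ᴴλ̄`: the residual at `x₀` is `M`-orthogonal to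
`D̄(x̄ − x̄₀)` for every feasible `x`, and Pythagoras for the positive definite form `M` gives the claim.
-/

section QuadraticForm

variable {R m n q : Type*} [CommRing R] [PartialOrder R] [StarRing R] [IsOrderedAddMonoid R]
  [Fintype m] [Fintype n] [Fintype q]

theorem Matrix.PosSemidef.dotProduct_mulVec_le_sub {M : Matrix m m R} (hM : M.PosSemidef)
    {u e : m → R} (horth : star e ⬝ᵥ M *ᵥ u = 0) :
    star u ⬝ᵥ M *ᵥ u ≤ star (u - e) ⬝ᵥ M *ᵥ (u - e) := by
  have horth' : star u ⬝ᵥ M *ᵥ e = 0 := by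
    rw [star_dotProduct, star_mulVec, hM.isHermitian.eq, ← dotProduct_mulVec, horth, star_zero]
  have hexpand : star (u - e) ⬝ᵥ M *ᵥ (u - e) = star u ⬝ᵥ M *ᵥ u + star e ⬝ᵥ M *ᵥ e := by
    rw [mulVec_sub, star_sub, sub_dotProduct, dotProduct_sub, dotProduct_sub, horth, horth']
    abel
  rw [hexpand]
  exact le_add_of_nonneg_right (hM.dotProduct_mulVec_nonneg e)

theorem Matrix.PosSemidef.residual_le_of_stationary {M : Matrix m m R} (hM : M.PosSemidef)
    (A : Matrix m n R) (B : Matrix q n R) (b : m → R) {x₀ x : n → R} (μ : q → R)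
    (hstat : Aᴴ *ᵥ (M *ᵥ (b - A *ᵥ x₀)) = Bᴴ *ᵥ μ) (hx : B *ᵥ x = B *ᵥ x₀) :
    star (b - A *ᵥ x₀) ⬝ᵥ M *ᵥ (b - A *ᵥ x₀) ≤ star (b - A *ᵥ x) ⬝ᵥ M *ᵥ (b - A *ᵥ x) := by
  have hsplit : b - A *ᵥ x = (b - A *ᵥ x₀) - A *ᵥ (x - x₀) := by
    rw [mulVec_sub]; abel
  have horth : star (A *ᵥ (x - x₀)) ⬝ᵥ M *ᵥ (b - A *ᵥ x₀) = 0 := by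
    rw [star_mulVec, ← dotProduct_mulVec, hstat, dotProduct_mulVec, ← star_mulVec,
      mulVec_sub, hx, sub_self, star_zero, zero_dotProduct]
  rw [hsplit]
  exact hM.dotProduct_mulVec_le_sub horth

end QuadraticForm

section Conj

variable {m n p : Type*}

theorem cconj_cconj (A : Matrix m n ℂ) : cconj (cconj A) = A := by
  ext i j; simp [cconj]

theorem cconj_zero : cconj (0 : Matrix m n ℂ) = 0 := by
  ext i j; simp [cconj]

theorem cconj_sub (A B : Matrix m n ℂ) : cconj (A - B) = cconj A - cconj B := by
  ext i j; simp [cconj]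

theorem cconj_add (A B : Matrix m n ℂ) : cconj (A + B) = cconj A + cconj B := by
  ext i j; simp [cconj]

theorem cconj_smul (r : ℂ) (A : Matrix m n ℂ) : cconj (r • A) = star r • cconj A := by
  ext i j; simp [cconj]

theorem cconj_mul [Fintype n] (A : Matrix m n ℂ) (B : Matrix n p ℂ) :
    cconj (A * B) = cconj A * cconj B :=
  Matrix.map_mul

theorem cconj_eq_transpose_conjTranspose (A : Matrix m n ℂ) : cconj A = Aᴴᵀ := by
  ext i j; simp [cconj, conjTranspose_apply]

theorem cconj_conjTranspose (A : Matrix m n ℂ) : cconj Aᴴ = Aᵀ := by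
  rw [cconj_eq_transpose_conjTranspose, conjTranspose_conjTranspose]

theorem cconj_inv [Fintype n] [DecidableEq n] (A : Matrix n n ℂ) : cconj A⁻¹ = (cconj A)⁻¹ := by
  rw [cconj_eq_transpose_conjTranspose, cconj_eq_transpose_conjTranspose,
    ← transpose_nonsing_inv, ← conjTranspose_nonsing_inv]

theorem isUnit_det_cconj [Fintype n] [DecidableEq n] {A : Matrix n n ℂ} (hA : IsUnit A.det) :
    IsUnit (cconj A).det := by
  rw [cconj_eq_transpose_conjTranspose, det_transpose, det_conjTranspose]
  exact hA.star

theorem cconj_mulVec_star [Fintype n] (A : Matrix m n ℂ) (v : n → ℂ) :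
    cconj A *ᵥ star v = star (A *ᵥ v) := by
  funext i
  simp [cconj, mulVec, dotProduct]

end Conj

section Augmented

variable {m n p : Type*}

theorem aug_mul [Fintype n] (A B : Matrix m n ℂ) (E F : Matrix n p ℂ) :
    aug A B * aug E F = aug (A * E + B * cconj F) (A * F + B * cconj E) := by
  have hconj : ∀ (X Y : Matrix m n ℂ) (U V : Matrix n p ℂ),
      cconj Y * U + cconj X * cconj V = cconj (X * V + Y * cconj U) := by
    intro X Y U V
    rw [cconj_add, cconj_mul, cconj_mul, cconj_cconj, add_comm]
  rw [aug, aug, fromBlocks_multiply, hconj, hconj, aug]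

theorem aug_smul (r : ℂ) (hr : star r = r) (A B : Matrix m n ℂ) :
    aug (r • A) (r • B) = r • aug A B := by
  rw [aug, aug, cconj_smul, cconj_smul, hr, fromBlocks_smul]

theorem aug_zero_conjTranspose (A : Matrix m n ℂ) : (aug A 0)ᴴ = aug Aᴴ 0 := by
  ext i j
  rcases i with i | i <;> rcases j with j | j <;> simp [aug, cconj, conjTranspose_apply]

theorem aug_mulVec_augVec [Fintype n] (A B : Matrix m n ℂ) (v : n → ℂ) :
    aug A B *ᵥ augVec v = augVec (A *ᵥ v + B *ᵥ star v) := by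
  have hv : augVec v = Sum.elim v (star v) := rfl
  have hB : cconj B *ᵥ v = star (B *ᵥ star v) := by
    simpa using cconj_mulVec_star B (star v)
  rw [aug, hv, fromBlocks_mulVec]
  funext i
  rcases i with i | i
  · simp [augVec]
  · simp [augVec, hB, cconj_mulVec_star, add_comm]

theorem aug_mul_aug_eq_schur [Fintype n] [DecidableEq n] (T : Matrix m n ℂ)
    {S₁ S₂ : Matrix n n ℂ} (hsym : S₂ᵀ = S₂) (hS₁ : IsUnit S₁.det) :
    aug T (-(T * (S₂ * (cconj S₁)⁻¹))) * aug S₁ S₂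
      = aug (T * cconj (cconj S₁ - S₂ᴴ * S₁⁻¹ * S₂)) 0 := by
  have hschur : cconj (cconj S₁ - S₂ᴴ * S₁⁻¹ * S₂) = S₁ - S₂ * (cconj S₁)⁻¹ * cconj S₂ := by
    rw [cconj_sub, cconj_cconj, cconj_mul, cconj_mul, cconj_conjTranspose, hsym, cconj_inv]
  have hcancel : T * S₂ + -(T * (S₂ * (cconj S₁)⁻¹)) * cconj S₁ = 0 := by
    rw [Matrix.neg_mul, ← Matrix.mul_assoc,
      Matrix.nonsing_inv_mul_cancel_right _ _ (isUnit_det_cconj hS₁), add_neg_cancel]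
  rw [aug_mul, hcancel, hschur, Matrix.mul_sub, Matrix.neg_mul, ← sub_eq_add_neg,
    Matrix.mul_assoc T]

end Augmented

theorem ml_stationarity_minimizes_general
    (N K Q : ℕ)
    (D : Matrix (Fin K) (Fin N) ℂ) (C : Matrix (Fin Q) (Fin N) ℂ)
    (S₁ S₂ : Matrix (Fin K) (Fin K) ℂ)
    (hS₁ : IsUnit S₁.det) (hsym : S₂ᵀ = S₂)
    (W P : Matrix (Fin K) (Fin K) ℂ)
    (hW : W = S₂ * (cconj S₁)⁻¹)
    (hP : P = cconj S₁ - S₂ᴴ * S₁⁻¹ * S₂)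
    (hPinv : IsUnit P.det)
    (G₁ G₂ : Matrix (Fin N) (Fin N) ℂ)
    (hG₁ : G₁ = (2 : ℂ) • (Dᴴ * (cconj P)⁻¹ * D))
    (hG₂ : G₂ = (-2 : ℂ) • (Dᴴ * (cconj P)⁻¹ * W * cconj D))
    (hpd : (aug S₁ S₂).PosDef)
    (z : Fin K → ℂ) (c : Fin Q → ℂ)
    (g : Fin N → ℂ)
    (hg : g = ((2 : ℂ) • (Dᴴ * (cconj P)⁻¹)).mulVec
      (z - W.mulVec (fun i => starRingEnd ℂ (z i))))
    (x₀ : Fin N → ℂ)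
    (hx₀ : C.mulVec x₀ = c)
    (hstat : ∃ lam : Fin Q → ℂ,
      augVec g = (aug G₁ G₂).mulVec (augVec x₀) + (aug C 0)ᴴ.mulVec (augVec lam)) :
    ∀ x : Fin N → ℂ, C.mulVec x = c →
      star (augVec z - (aug D 0).mulVec (augVec x₀))
          ⬝ᵥ ((aug S₁ S₂)⁻¹).mulVec (augVec z - (aug D 0).mulVec (augVec x₀))
        ≤ star (augVec z - (aug D 0).mulVec (augVec x))
          ⬝ᵥ ((aug S₁ S₂)⁻¹).mulVec (augVec z - (aug D 0).mulVec (augVec x)) := by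
  intro x hx
  obtain ⟨lam, hlam⟩ := hstat
  set M := (aug S₁ S₂)⁻¹
  set T := (2 : ℂ) • (Dᴴ * (cconj P)⁻¹)
  have hJS : aug T (-(T * W)) * aug S₁ S₂ = (2 : ℂ) • (aug D 0)ᴴ := by
    rw [hW, aug_mul_aug_eq_schur T hsym hS₁, ← hP, smul_mul,
      Matrix.nonsing_inv_mul_cancel_right _ _ (isUnit_det_cconj hPinv), aug_zero_conjTranspose,
      ← aug_smul 2 (by simp), smul_zero]
  have hJ : aug T (-(T * W)) = (2 : ℂ) • ((aug D 0)ᴴ * M) := by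
    rw [← smul_mul, ← hJS,
      Matrix.mul_nonsing_inv_cancel_right _ _ ((isUnit_iff_isUnit_det _).1 hpd.isUnit)]
  have hgJ : augVec g = aug T (-(T * W)) *ᵥ augVec z := by
    rw [aug_mulVec_augVec, hg, mulVec_sub, neg_mulVec, ← mulVec_mulVec, ← sub_eq_add_neg]
    rfl
  have hGJ : aug G₁ G₂ = aug T (-(T * W)) * aug D 0 := by
    rw [aug_mul, cconj_zero, hG₁, hG₂]
    simp [T, smul_mul]
  have hnormal : (aug D 0)ᴴ *ᵥ (M *ᵥ (augVec z - aug D 0 *ᵥ augVec x₀))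
      = (aug C 0)ᴴ *ᵥ ((1 / 2 : ℂ) • augVec lam) := by
    rw [mulVec_smul, eq_sub_of_add_eq' hlam.symm, hgJ, hGJ, ← mulVec_mulVec, ← mulVec_sub, hJ,
      smul_mulVec, smul_smul, mulVec_mulVec]
    norm_num
  have hCx : aug C 0 *ᵥ augVec x = aug C 0 *ᵥ augVec x₀ := by
    simp only [aug_mulVec_augVec, zero_mulVec, add_zero, hx, hx₀]
  exact hpd.inv.posSemidef.residual_le_of_stationary _ _ _ _ hnormal hCx

/-- If `x₀` satisfies the constraint `C·x₀ = c` and the stationarity equation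
`ḡ = Ḡ·x̄₀ + C̄ᴴ·λ̄` for some `λ`, then `x₀` minimizes the constrained weighted
least-squares objective `(z̄ − D̄·x̄)ᴴ·Σ̄⁻¹·(z̄ − D̄·x̄)` over all `x` with `C·x = c`. -/
theorem ml_stationarity_minimizes
    (N K Q : ℕ) (hN : 0 < N) (hK : 0 < K) (hQ : 0 < Q)
    (D : Matrix (Fin K) (Fin N) ℂ) (C : Matrix (Fin Q) (Fin N) ℂ)
    (S₁ S₂ : Matrix (Fin K) (Fin K) ℂ)
    (hherm : S₁ᴴ = S₁) (hS₁ : IsUnit S₁.det) (hsym : S₂ᵀ = S₂)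
    (W P : Matrix (Fin K) (Fin K) ℂ)
    (hW : W = S₂ * (cconj S₁)⁻¹)
    (hP : P = cconj S₁ - S₂ᴴ * S₁⁻¹ * S₂)
    (hPinv : IsUnit P.det)
    (G₁ G₂ : Matrix (Fin N) (Fin N) ℂ)
    (hG₁ : G₁ = (2 : ℂ) • (Dᴴ * (cconj P)⁻¹ * D))
    (hG₂ : G₂ = (-2 : ℂ) • (Dᴴ * (cconj P)⁻¹ * W * cconj D))
    (hpd : (aug S₁ S₂).PosDef)
    (z : Fin K → ℂ) (c : Fin Q → ℂ)
    (g : Fin N → ℂ)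
    (hg : g = ((2 : ℂ) • (Dᴴ * (cconj P)⁻¹)).mulVec
      (z - W.mulVec (fun i => starRingEnd ℂ (z i))))
    (x₀ : Fin N → ℂ)
    (hx₀ : C.mulVec x₀ = c)
    (hstat : ∃ lam : Fin Q → ℂ,
      augVec g = (aug G₁ G₂).mulVec (augVec x₀) + (aug C 0)ᴴ.mulVec (augVec lam)) :
    ∀ x : Fin N → ℂ, C.mulVec x = c →
      star (augVec z - (aug D 0).mulVec (augVec x₀))
          ⬝ᵥ ((aug S₁ S₂)⁻¹).mulVec (augVec z - (aug D 0).mulVec (augVec x₀))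
        ≤ star (augVec z - (aug D 0).mulVec (augVec x))
          ⬝ᵥ ((aug S₁ S₂)⁻¹).mulVec (augVec z - (aug D 0).mulVec (augVec x)) :=
  ml_stationarity_minimizes_general N K Q D C S₁ S₂ hS₁ hsym W P hW hP hPinv G₁ G₂ hG₁ hG₂ hpd z c g
    hg x₀ hx₀ hstat
end
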